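/- arXiv:2011.00787 — 4 statements merged into one kernel-verified Lean document; each statement's English description precedes it below -/
import Mathlib

section
/- Fix a natural number k. For real parameters n, a, b and β > 0, define M_k(n,β,a,b) := ∑_{κ: |κ|=k} ([u_1]_κ^{(2/β)} / [u_2]_κ^{(2/β)}) · C_κ^{(2/β)}(n), where u_1 := (β/2)(n−1)+a+1, u_2 := β(n−1)+a+b+2, and the sum runs over all partitions κ of k. Then, provided [u_2]_κ^{(2/β)} ≠ 0 for every partition κ of k with the given parameters, and the corresponding denominators are nonzero for the dual parameter set (−βn/2, 4/β, −2a/β, −2b/β), the functional equation M_k(n,β,a,b) = (−2/β)^k · M_k(−βn/2, 4/β, −2a/β, −2b/β) holds. -/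
/-- The conjugate partition evaluated at `j ≥ 1`: the number of parts of `κ` that are `≥ j`. -/
def conjPart {n : ℕ} (κ : Nat.Partition n) (j : ℕ) : ℕ :=
  Multiset.card (κ.parts.filter fun q => j ≤ q)

/-- The `i`-th largest part of `κ` (1-indexed); `0` if `i` exceeds the number of parts. -/
def partOf {n : ℕ} (κ : Nat.Partition n) (i : ℕ) : ℕ :=
  ((Finset.Icc 1 n).filter fun j => i ≤ conjPart κ j).card

/-- The generalized Pochhammer symbol
`[u]_κ^{(α)} = ∏_{j≥1} ∏_{i=0}^{κ_j−1} (u − (j−1)/α + i)`. -/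
noncomputable def genPoch (α : ℝ) {n : ℕ} (κ : Nat.Partition n) (u : ℝ) : ℝ :=
  ∏ j ∈ Finset.range (conjPart κ 1), ∏ i ∈ Finset.range (partOf κ (j + 1)),
    (u - (j : ℝ) / α + i)

/-- The value `C_κ^{(α)}(x)` of the renormalised Jack polynomial with all arguments equal to 1,
as a rational expression in the parameter `x`. -/
noncomputable def CJack (α : ℝ) {n : ℕ} (κ : Nat.Partition n) (x : ℝ) : ℝ :=
  α ^ n * (n.factorial : ℝ) *
      (∏ i ∈ Finset.range (conjPart κ 1), ∏ j ∈ Finset.range (partOf κ (i + 1)),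
        (α * j + x - i)) /
    ((∏ i ∈ Finset.range (conjPart κ 1), ∏ j ∈ Finset.range (partOf κ (i + 1)),
        (α * ((partOf κ (i + 1) : ℝ) - j) + (conjPart κ (j + 1) : ℝ) - ((i : ℝ) + 1))) *
      (∏ i ∈ Finset.range (conjPart κ 1), ∏ j ∈ Finset.range (partOf κ (i + 1)),
        (α * ((partOf κ (i + 1) : ℝ) - j - 1) + (conjPart κ (j + 1) : ℝ) - i)))

/-- `M_k(n,β,a,b) = ∑_{|κ|=k} ([u_1]_κ^{(2/β)}/[u_2]_κ^{(2/β)}) C_κ^{(2/β)}(n)` with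
`u_1 = (β/2)(n−1)+a+1`, `u_2 = β(n−1)+a+b+2`. -/
noncomputable def Mfun (k : ℕ) (n β a b : ℝ) : ℝ :=
  ∑ κ : Nat.Partition k,
    genPoch (2 / β) κ ((β / 2) * (n - 1) + a + 1) /
        genPoch (2 / β) κ (β * (n - 1) + a + b + 2) *
      CJack (2 / β) κ n

/-!
Conjugation `κ ↦ κ'` is an involution of the partitions of `k` that transposes Young diagrams.
Transposing the cell products that define `[u]_κ^{(α)}` and `C_κ^{(α)}(x)`, with `α` replaced by
`1/α`, gives `[-α u]_{κ'}^{(1/α)} = (-α)^k [u]_κ^{(α)}` and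
`C_{κ'}^{(1/α)}(-x/α) = (-1/α)^k C_κ^{(α)}(x)`: each factor is rescaled, and the upper and lower
hook products trade places. For `α = 2/β` the dual parameters are exactly `u_i ↦ -α u_i` and
`n ↦ -n/α`, so after reindexing the sum by `κ ↦ κ'` the identity holds term by term.
-/

open Finset

theorem Multiset.count_add_card_filter_lt (s : Multiset ℕ) (v : ℕ) :
    s.count v + card (s.filter (v < ·)) = card (s.filter (v ≤ ·)) := by
  induction s using Multiset.induction_on with
  | empty => simp
  | cons a s ih =>
    simp only [count_cons, filter_cons, card_add, apply_ite card, card_singleton, card_zero]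
    split_ifs <;> omega

theorem Multiset.sum_range_card_filter_lt {s : Multiset ℕ} {m : ℕ} (hs : ∀ p ∈ s, p ≤ m) :
    ∑ j ∈ Finset.range m, card (s.filter (j < ·)) = s.sum := by
  induction s using Multiset.induction_on with
  | empty => simp
  | cons a s ih =>
    have hfilter : (Finset.range m).filter (· < a) = Finset.range a := by
      ext j
      simp only [Finset.mem_filter, Finset.mem_range]
      have := hs a (mem_cons_self a s)
      omega
    have ha : ∑ j ∈ Finset.range m, (if j < a then 1 else 0) = a := by
      rw [Finset.sum_boole, hfilter, Finset.card_range, Nat.cast_id]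
    simp only [filter_cons, card_add, Finset.sum_add_distrib, sum_cons, apply_ite card,
      card_singleton, card_zero, ha, ih fun p hp => hs p (mem_cons_of_mem hp)]

namespace Nat.Partition

variable {n : ℕ} (κ : Nat.Partition n)

theorem conjPart_antitone : Antitone (conjPart κ) := fun _ _ h =>
  Multiset.card_le_card (Multiset.monotone_filter_right _ fun _ => h.trans)

theorem lt_partOf_iff (i j : ℕ) : j < partOf κ (i + 1) ↔ i < conjPart κ (j + 1) := by
  constructor
  · intro h
    by_contra! hc
    have hsub : (Icc 1 n).filter (i + 1 ≤ conjPart κ ·) ⊆ Icc 1 j := by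
      intro c hc'
      simp only [mem_filter, mem_Icc] at hc' ⊢
      by_contra! hcj
      have := conjPart_antitone κ (show j + 1 ≤ c by omega)
      omega
    have := card_le_card hsub
    simp only [Nat.card_Icc, partOf] at this h
    omega
  · intro h
    obtain ⟨p, hp⟩ := Multiset.card_pos_iff_exists_mem.mp (show 0 < conjPart κ (j + 1) by omega)
    rw [Multiset.mem_filter] at hp
    have hsub : Icc 1 (j + 1) ⊆ (Icc 1 n).filter (i + 1 ≤ conjPart κ ·) := by
      intro c hc
      simp only [mem_Icc, mem_filter] at hc ⊢
      have := conjPart_antitone κ hc.2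
      have := le_of_mem_parts hp.1
      omega
    have := card_le_card hsub
    simp only [Nat.card_Icc, partOf] at this ⊢
    omega

theorem le_partOf_one {p : ℕ} (hp : p ∈ κ.parts) : p ≤ partOf κ 1 := by
  obtain ⟨q, rfl⟩ := Nat.exists_eq_add_one.mpr (κ.parts_pos hp)
  rw [Nat.add_one_le_iff, lt_partOf_iff]
  exact Multiset.card_pos_iff_exists_mem.mpr ⟨q + 1, Multiset.mem_filter.mpr ⟨hp, le_rfl⟩⟩

theorem sum_range_conjPart {m : ℕ} (hm : ∀ p ∈ κ.parts, p ≤ m) :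
    ∑ j ∈ range m, conjPart κ (j + 1) = n :=
  (Multiset.sum_range_card_filter_lt hm).trans κ.parts_sum

theorem sum_Icc_conjPart : ∑ j ∈ Icc 1 n, conjPart κ j = n := by
  rw [← Finset.Ico_add_one_right_eq_Icc, sum_Ico_eq_sum_range]
  simpa [add_comm] using sum_range_conjPart κ fun _ => le_of_mem_parts

def conj : Nat.Partition n :=
  .ofSums n ((Icc 1 n).val.map (conjPart κ))
    ((sum_eq_multiset_sum _ _).symm.trans (sum_Icc_conjPart κ))

theorem conjPart_conj (j : ℕ) : conjPart (conj κ) (j + 1) = partOf κ (j + 1) := by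
  simp only [conjPart, conj, ofSums_parts, Multiset.filter_filter, partOf]
  rw [Multiset.filter_congr fun x _ => and_iff_left_of_imp fun (h : j + 1 ≤ x) => by omega,
    Multiset.filter_map, Multiset.card_map]
  rfl

theorem partOf_conj (i : ℕ) : partOf (conj κ) (i + 1) = conjPart κ (i + 1) :=
  eq_of_forall_lt_iff fun j => by rw [lt_partOf_iff, conjPart_conj, lt_partOf_iff]

theorem ext_conjPart {κ μ : Nat.Partition n} (h : ∀ j, conjPart κ (j + 1) = conjPart μ (j + 1)) :
    κ = μ := by
  refine Nat.Partition.ext (Multiset.ext.mpr fun v => ?_)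
  cases v with
  | zero =>
    rw [Multiset.count_eq_zero_of_notMem fun h => (κ.parts_pos h).false,
      Multiset.count_eq_zero_of_notMem fun h => (μ.parts_pos h).false]
  | succ v =>
    have hκ : κ.parts.count (v + 1) + conjPart κ (v + 1 + 1) = conjPart κ (v + 1) :=
      Multiset.count_add_card_filter_lt _ _
    have hμ : μ.parts.count (v + 1) + conjPart μ (v + 1 + 1) = conjPart μ (v + 1) :=
      Multiset.count_add_card_filter_lt _ _
    have := h v
    have := h (v + 1)
    omega

theorem conj_involutive : Function.Involutive (conj (n := n)) := fun κ =>
  ext_conjPart fun j => by rw [conjPart_conj, partOf_conj]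

section CellProd

variable {M : Type*} [CommMonoid M]

def cellProd (f : ℕ → ℕ → M) : M :=
  ∏ i ∈ range (conjPart κ 1), ∏ j ∈ range (partOf κ (i + 1)), f i j

theorem cellProd_eq_prod_columns (f : ℕ → ℕ → M) :
    cellProd κ f = ∏ j ∈ range (partOf κ 1), ∏ i ∈ range (conjPart κ (j + 1)), f i j := by
  refine prod_comm' fun i j => ?_
  simp only [mem_range, lt_partOf_iff]
  have := conjPart_antitone κ (Nat.le_add_left 1 j)
  omega

theorem cellProd_conj (f : ℕ → ℕ → M) : cellProd (conj κ) f = cellProd κ fun i j => f j i := by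
  rw [cellProd_eq_prod_columns κ, cellProd, (conjPart_conj κ 0 : conjPart (conj κ) 1 = _)]
  simp only [partOf_conj]

theorem cellProd_const (c : M) : cellProd κ (fun _ _ => c) = c ^ n := by
  simp only [cellProd_eq_prod_columns, prod_const, card_range, prod_pow_eq_pow_sum]
  rw [sum_range_conjPart κ fun _ => le_partOf_one κ]

theorem cellProd_mul (f g : ℕ → ℕ → M) :
    cellProd κ (fun i j => f i j * g i j) = cellProd κ f * cellProd κ g := by
  simp only [cellProd, prod_mul_distrib]

theorem cellProd_const_mul (c : M) (f : ℕ → ℕ → M) :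
    cellProd κ (fun i j => c * f i j) = c ^ n * cellProd κ f := by
  rw [cellProd_mul, cellProd_const]

end CellProd

theorem genPoch_conj {α : ℝ} (hα : α ≠ 0) (u : ℝ) :
    genPoch α⁻¹ (conj κ) (-(α * u)) = (-α) ^ n * genPoch α κ u := by
  change cellProd _ _ = _ * cellProd _ _
  rw [cellProd_conj, ← cellProd_const_mul]
  congr 1
  funext i j
  field_simp
  ring

/-- The upper hook product `∏_{s ∈ κ} (α (a(s) + 1) + l(s))`; `lowerHookProd` is
`∏_{s ∈ κ} (α a(s) + l(s) + 1)`. Here `a(s)` and `l(s)` are the arm and leg lengths of `s`. -/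
def upperHookProd (α : ℝ) : ℝ :=
  cellProd κ fun i j => α * ((partOf κ (i + 1) : ℝ) - j) + conjPart κ (j + 1) - (i + 1)

def lowerHookProd (α : ℝ) : ℝ :=
  cellProd κ fun i j => α * ((partOf κ (i + 1) : ℝ) - j - 1) + conjPart κ (j + 1) - i

theorem upperHookProd_conj {α : ℝ} (hα : α ≠ 0) :
    upperHookProd (conj κ) α⁻¹ = α⁻¹ ^ n * lowerHookProd κ α := by
  simp only [upperHookProd, lowerHookProd, cellProd_conj, partOf_conj, conjPart_conj,
    ← cellProd_const_mul]
  congr 1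
  funext i j
  field_simp
  ring

theorem lowerHookProd_conj {α : ℝ} (hα : α ≠ 0) :
    lowerHookProd (conj κ) α⁻¹ = α⁻¹ ^ n * upperHookProd κ α := by
  simp only [upperHookProd, lowerHookProd, cellProd_conj, partOf_conj, conjPart_conj,
    ← cellProd_const_mul]
  congr 1
  funext i j
  field_simp
  ring

theorem CJack_eq_cellProd (α x : ℝ) :
    CJack α κ x = α ^ n * n.factorial * cellProd κ (fun i j => α * j + x - i) /
      (upperHookProd κ α * lowerHookProd κ α) :=
  rfl

theorem CJack_conj {α : ℝ} (hα : α ≠ 0) (x : ℝ) :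
    CJack α⁻¹ (conj κ) (-(α⁻¹ * x)) = (-α⁻¹) ^ n * CJack α κ x := by
  have hcontent : cellProd (conj κ) (fun i j => α⁻¹ * j + -(α⁻¹ * x) - i) =
      (-α⁻¹) ^ n * cellProd κ (fun i j => α * j + x - i) := by
    rw [cellProd_conj, ← cellProd_const_mul]
    congr 1
    funext i j
    field_simp
    ring
  rw [CJack_eq_cellProd, CJack_eq_cellProd, hcontent, upperHookProd_conj κ hα,
    lowerHookProd_conj κ hα]
  have hpow : α⁻¹ ^ n * α ^ n = 1 := by rw [← mul_pow, inv_mul_cancel₀ hα, one_pow]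
  simp only [div_eq_mul_inv, mul_inv, inv_pow, inv_inv]
  linear_combination ((-α⁻¹) ^ n * n.factorial * cellProd κ (fun i j => α * j + x - i) * α ^ n *
    (upperHookProd κ α)⁻¹ * (lowerHookProd κ α)⁻¹) * hpow

end Nat.Partition

theorem moment_functional_equation_general (k : ℕ) (n a b β : ℝ) (hβ : 0 < β) :
    Mfun k n β a b = (-2 / β) ^ k * Mfun k (-β * n / 2) (4 / β) (-2 * a / β) (-2 * b / β) := by
  have hα : 2 / β ≠ 0 := by positivity
  have hdual : 2 / (4 / β) = (2 / β)⁻¹ := by field_simp; ring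
  have hu₁ : 4 / β / 2 * (-β * n / 2 - 1) + -2 * a / β + 1
      = -(2 / β * (β / 2 * (n - 1) + a + 1)) := by field_simp; ring
  have hu₂ : 4 / β * (-β * n / 2 - 1) + -2 * a / β + -2 * b / β + 2
      = -(2 / β * (β * (n - 1) + a + b + 2)) := by field_simp; ring
  have hx : -β * n / 2 = -((2 / β)⁻¹ * n) := by field_simp
  have hscale : (-2 / β) ^ k * (-(2 / β)⁻¹) ^ k = 1 := by
    rw [← mul_pow, neg_div, neg_mul_neg, mul_inv_cancel₀ hα, one_pow]
  rw [Mfun, Mfun, mul_sum]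
  refine Fintype.sum_bijective Nat.Partition.conj Nat.Partition.conj_involutive.bijective _ _
    fun κ => ?_
  rw [hu₁, hu₂, hx, hdual, κ.genPoch_conj hα, κ.genPoch_conj hα, κ.CJack_conj hα,
    mul_div_mul_left _ _ (pow_ne_zero k (neg_ne_zero.mpr hα)), mul_left_comm _ (_ ^ k),
    ← mul_assoc, hscale, one_mul]

theorem moment_functional_equation (k : ℕ) (n a b β : ℝ) (hβ : 0 < β)
    (hden : ∀ κ : Nat.Partition k, genPoch (2 / β) κ (β * (n - 1) + a + b + 2) ≠ 0)
    (hden' : ∀ κ : Nat.Partition k,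
      genPoch (2 / (4 / β)) κ
        ((4 / β) * (-β * n / 2 - 1) + (-2 * a / β) + (-2 * b / β) + 2) ≠ 0) :
    Mfun k n β a b = (-2 / β) ^ k * Mfun k (-β * n / 2) (4 / β) (-2 * a / β) (-2 * b / β) :=
  moment_functional_equation_general k n a b β hβ
end

section
/- Let N ≥ 0 be an integer. Define (N+1)×(N+1) real matrices, indexed by j, k ∈ {0,…,N}: A with A_{j,j} = −(N−j), A_{j,j+1} = N−j (for j ≤ N−1), and A_{j,k} = 0 otherwise; P with P_{j,k} = binom(N−j, N−k); and the diagonal matrix Λ with Λ_{j,j} = −(N−j). Then A · P = P · Λ; that is, the columns of P are eigenvectors of A with eigenvalues −N, −(N−1), …, −1, 0. -/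
/-! Row `j` of `A` is `(N - j)(e_{j+1} - e_j)`, so with `m = N - j`, `r = N - k` the entry
`(A P)_{jk}` is `m (C(m-1, r) - C(m, r))`, and the absorption identity
`m C(m-1, r) = (m - r) C(m, r)` turns it into `-r C(m, r) = (P Λ)_{jk}`. -/

lemma Nat.cast_mul_choose_pred {R : Type*} [CommRing R] (m r : ℕ) :
    (m : R) * ((m - 1).choose r : ℕ) = ((m : R) - r) * (m.choose r : ℕ) := by
  rcases m with _ | n
  · rcases r with _ | r <;> simp
  rcases le_or_gt r (n + 1) with hr | hr
  · have h := congrArg (Nat.cast : ℕ → R) (Nat.choose_mul_succ_eq n r)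
    push_cast [Nat.cast_sub hr] at h
    simpa [mul_comm] using h
  · simp [Nat.choose_eq_zero_of_lt hr, Nat.choose_eq_zero_of_lt (Nat.lt_of_succ_lt hr)]

namespace Matrix

variable {R α : Type*} [NonUnitalNonAssocSemiring R] {n : ℕ}

lemma mul_apply_castSucc_of_bidiagonal {A : Matrix (Fin (n + 1)) (Fin (n + 1)) R}
    (M : Matrix (Fin (n + 1)) α R) (i : Fin n) (k : α)
    (hA : ∀ l, l ≠ i.castSucc → l ≠ i.succ → A i.castSucc l = 0) :
    (A * M) i.castSucc k =
      A i.castSucc i.castSucc * M i.castSucc k + A i.castSucc i.succ * M i.succ k := by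
  rw [mul_apply]
  exact Fintype.sum_eq_add _ _ Fin.castSucc_lt_succ.ne fun l hl => by rw [hA l hl.1 hl.2, zero_mul]

lemma mul_apply_of_row_eq_zero {m : Type*} [Fintype m] {A : Matrix α m R} (M : Matrix m α R)
    {j : α} (k : α) (hA : ∀ l, A j l = 0) : (A * M) j k = 0 := by
  simp [mul_apply, hA]

end Matrix

theorem eigenvectors_of_A (N : ℕ)
    (A P Λ : Matrix (Fin (N + 1)) (Fin (N + 1)) ℝ)
    (hA : ∀ j k : Fin (N + 1),
      A j k = if k = j then -((N : ℝ) - (j : ℕ))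
        else if (k : ℕ) = (j : ℕ) + 1 then (N : ℝ) - (j : ℕ) else 0)
    (hP : ∀ j k : Fin (N + 1), P j k = ((N - (j : ℕ)).choose (N - (k : ℕ)) : ℝ))
    (hΛ : Λ = Matrix.diagonal fun j : Fin (N + 1) => -((N : ℝ) - (j : ℕ))) :
    A * P = P * Λ := by
  ext j k
  rw [hΛ, Matrix.mul_diagonal, hP, ← Nat.cast_sub (Nat.lt_succ_iff.mp k.isLt)]
  induction j using Fin.lastCases with
  | last =>
    rw [Matrix.mul_apply_of_row_eq_zero _ _ fun l => by rw [hA]; split_ifs <;> simp_all]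
    rw [Fin.val_last, Nat.sub_self]
    linear_combination Nat.cast_mul_choose_pred (R := ℝ) 0 (N - k)
  | cast i =>
    rw [Matrix.mul_apply_castSucc_of_bidiagonal _ _ _ fun l h₁ h₂ => by
      rw [hA, if_neg h₁, if_neg fun h => h₂ (Fin.ext (by simpa using h))]]
    rw [hA, hA, if_pos rfl, if_neg Fin.castSucc_lt_succ.ne', if_pos (by simp), hP, hP]
    simp only [Fin.val_castSucc, Fin.val_succ]
    rw [← Nat.cast_sub i.isLt.le, Nat.sub_add_eq]
    linear_combination Nat.cast_mul_choose_pred (R := ℝ) (N - i) (N - k)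
end

section
/- Let N ≥ 0 be an integer, let j, k ∈ {0,…,N}, and let x be a real number. Then ∑_{k'=0}^N (−1)^{k'} binom(N−j, N−k') binom(N−k', N−k) x^{k'} equals ((N−j)! / ((N−k)! (k−j)!)) · (−x)^j (1−x)^{k−j} if j ≤ k, and equals 0 if j > k. -/
/-!
Substituting `k' = j + i`, only `j ≤ k' ≤ k` contributes, and by trinomial revision
`C(n, n - i) C(n - i, p) = C(n, p) C(n - p, i)` with `n = N - j`, `p = N - k`.
The sum thus becomes `C(N - j, N - k) (-x)^j ∑ᵢ C(k - j, i) (-x)^i`, and the binomial theorem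
finishes.
-/

open Finset

theorem Nat.choose_sub_mul_choose {n i : ℕ} (hi : i ≤ n) (p : ℕ) :
    n.choose (n - i) * (n - i).choose p = n.choose p * (n - p).choose i := by
  rcases le_or_gt p (n - i) with hp | hp
  · rw [Nat.choose_mul hp, Nat.choose_symm_of_eq_add (by omega : n - p = n - i - p + i)]
  rw [Nat.choose_eq_zero_of_lt hp, mul_zero]
  rcases le_or_gt p n with hpn | hpn
  · rw [Nat.choose_eq_zero_of_lt (by omega : n - p < i), mul_zero]
  · rw [Nat.choose_eq_zero_of_lt hpn, zero_mul]

theorem one_sub_pow_eq_sum_range {R : Type*} [CommRing R] (x : R) {m n : ℕ} (hmn : m ≤ n) :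
    (1 - x) ^ m = ∑ i ∈ range (n + 1), (m.choose i : R) * (-x) ^ i := by
  rw [sub_eq_neg_add, add_pow]
  simp_rw [one_pow, mul_one, mul_comm ((-x) ^ _)]
  refine sum_subset (range_subset_range.2 (by omega)) fun i _ hi => ?_
  rw [mem_range, not_lt] at hi
  simp [Nat.choose_eq_zero_of_lt (by omega : m < i)]

theorem sum_range_neg_one_pow_mul_choose_sub_mul_choose {R : Type*} [CommRing R] (n p : ℕ)
    (x : R) :
    ∑ i ∈ range (n + 1),
        (-1 : R) ^ i * (n.choose (n - i) : R) * ((n - i).choose p : R) * x ^ i =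
      n.choose p * (1 - x) ^ (n - p) := by
  rw [one_sub_pow_eq_sum_range x (Nat.sub_le n p), mul_sum]
  refine sum_congr rfl fun i hi => ?_
  have hin : i ≤ n := Nat.lt_succ_iff.1 (mem_range.1 hi)
  have revision := congrArg (Nat.cast : ℕ → R) (Nat.choose_sub_mul_choose hin p)
  push_cast at revision
  rw [neg_pow]
  linear_combination ((-1 : R) ^ i * x ^ i) * revision

theorem alternating_binomial_sum (N j k : ℕ) (hj : j ≤ N) (hk : k ≤ N) (x : ℝ) :
    ∑ k' ∈ Finset.range (N + 1),
        (-1 : ℝ) ^ k' * ((N - j).choose (N - k') : ℝ) * ((N - k').choose (N - k) : ℝ) * x ^ k' =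
      if j ≤ k then
        ((N - j).factorial : ℝ) / (((N - k).factorial : ℝ) * ((k - j).factorial : ℝ)) *
          (-x) ^ j * (1 - x) ^ (k - j)
      else 0 := by
  have below_j : ∑ k' ∈ range j,
      (-1 : ℝ) ^ k' * ((N - j).choose (N - k') : ℝ) * ((N - k').choose (N - k) : ℝ) * x ^ k'
      = 0 := sum_eq_zero fun k' hk' => by
    simp [Nat.choose_eq_zero_of_lt (by simp at hk'; omega : N - j < N - k')]
  have shifted : ∀ i,
      (-1 : ℝ) ^ (j + i) * ((N - j).choose (N - (j + i)) : ℝ) *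
          ((N - (j + i)).choose (N - k) : ℝ) * x ^ (j + i) =
        (-x) ^ j * ((-1 : ℝ) ^ i * ((N - j).choose (N - j - i) : ℝ) *
          ((N - j - i).choose (N - k) : ℝ) * x ^ i) := fun i => by
    rw [Nat.sub_sub, neg_pow]
    ring
  rw [show N + 1 = j + (N - j + 1) by omega, sum_range_add, below_j, zero_add]
  simp_rw [shifted]
  rw [← mul_sum, sum_range_neg_one_pow_mul_choose_sub_mul_choose]
  split_ifs with hjk
  · rw [Nat.cast_choose ℝ (by omega : N - k ≤ N - j), show N - j - (N - k) = k - j by omega]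
    ring
  · rw [Nat.choose_eq_zero_of_lt (by omega : N - j < N - k)]
    simp
end

section
/- Let N ≥ 1 be an integer and a, b, β real. Define (N+1)×(N+1) real matrices, indexed by j, k ∈ {0,…,N}: B with B_{j,j} = B̃_j − 1, B_{j,j−1} = −D̃_j (for j ≥ 1), and B_{j,k} = 0 otherwise; P with P_{j,k} = binom(N−j, N−k); and the tridiagonal matrix X with X_{j,j−1} = u_j := −j(βN/2 + b) + (β/2)j², X_{j,j} = v_j := (a+b+1+(β/2)(2N−1))j − (β/2)(N−j)(2j+1) + (βN/2 + b)(N−2j) − 1, X_{j,j+1} = w_j := (a+b+1+(β/2)(2N−1))(j−N) + (β/2)(N−j)(N−j−1) + (βN/2 + b)(N−j), and X_{j,k} = 0 otherwise. Then B · P = P · X (equivalently, P⁻¹ B P = X). -/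
/-!
Reversing the indices (`m = N - j`, `s = N - k`) turns `P` into Pascal's matrix `C(m, s)`. An
entry of `B * P` or `P * X` only involves `C(m, s - 1)`, `C(m, s)`, `C(m, s + 1)` (and
`C(m + 1, s)`, which Pascal's rule eliminates), and these are linked by the ratio relations
`C(m, s + 1) (s + 1) = C(m, s) (m - s)`. Modulo these two linear relations the entry identity is a
polynomial identity in `j, k, N, a, b, β`.
-/

open Finset

theorem Finset.sum_range_ite_add_one_eq {M : Type*} [AddCommMonoid M] {n c : ℕ} (hc : c ≤ n)
    (f : ℕ → M) :
    ∑ l ∈ range n, (if l + 1 = c then f l else 0) = if c = 0 then 0 else f (c - 1) := by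
  cases c with
  | zero => simp
  | succ c => simp [Nat.lt_of_succ_le hc]

namespace Matrix

variable {R : Type*} [NonUnitalNonAssocSemiring R] {n : ℕ}

theorem mul_apply_of_lowerBidiagonal {B M : Matrix (Fin n) (Fin n) R} {d e : ℕ → R}
    {m : ℕ → ℕ → R}
    (hB : ∀ j l : Fin n, B j l = if l = j then d j else if (l : ℕ) + 1 = j then e j else 0)
    (hM : ∀ l k : Fin n, M l k = m l k) (j k : Fin n) :
    (B * M) j k = d j * m j k + if (j : ℕ) = 0 then 0 else e j * m (j - 1) k := by
  have hsplit : ∀ l : ℕ, (if l = j then d j else if l + 1 = j then e j else 0) * m l k =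
      (if l = j then d j * m l k else 0) + (if l + 1 = j then e j * m l k else 0) := by
    intro l
    split_ifs <;> first | omega | simp
  simp only [mul_apply, hB, hM, Fin.ext_iff]
  rw [Fin.sum_univ_eq_sum_range
      (fun l => (if l = j then d j else if l + 1 = j then e j else 0) * m l k),
    sum_congr rfl fun l _ => hsplit l, sum_add_distrib, sum_ite_eq', if_pos (mem_range.2 j.2),
    sum_range_ite_add_one_eq j.2.le]

theorem mul_apply_of_tridiagonal {M X : Matrix (Fin n) (Fin n) R} {u v w : ℕ → R}
    {m : ℕ → ℕ → R} (hM : ∀ j l : Fin n, M j l = m j l)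
    (hX : ∀ l k : Fin n, X l k = if (k : ℕ) + 1 = l then u l else if k = l then v l
      else if (k : ℕ) = (l : ℕ) + 1 then w l else 0) (j k : Fin n) :
    (M * X) j k = (if (k : ℕ) + 1 < n then m j (k + 1) * u (k + 1) else 0) + m j k * v k +
      if (k : ℕ) = 0 then 0 else m j (k - 1) * w (k - 1) := by
  have hsplit : ∀ l : ℕ, m j l * (if k + 1 = l then u l else if k = l then v l
      else if k = l + 1 then w l else 0) = (if k + 1 = l then m j l * u l else 0) +
        (if k = l then m j l * v l else 0) + (if l + 1 = k then m j l * w l else 0) := by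
    intro l
    split_ifs <;> first | omega | simp
  simp only [mul_apply, hX, hM, Fin.ext_iff]
  rw [Fin.sum_univ_eq_sum_range (fun l => m j l * (if k + 1 = l then u l else if k = l then v l
      else if k = l + 1 then w l else 0)), sum_congr rfl fun l _ => hsplit l, sum_add_distrib,
    sum_add_distrib, sum_ite_eq, sum_ite_eq, if_pos (mem_range.2 k.2),
    sum_range_ite_add_one_eq k.2.le]
  simp only [mem_range]

end Matrix

noncomputable section Coefficients

variable (N : ℕ) (a b β : ℝ)

def Btilde (p : ℝ) : ℝ := p * (a + b + 1 + (β / 2) * (2 * N - p - 1))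

def Dtilde (p : ℝ) : ℝ := p * ((β / 2) * (N - p) + b)

def uCoeff (j : ℝ) : ℝ := -j * (β * N / 2 + b) + (β / 2) * j ^ 2

def vCoeff (j : ℝ) : ℝ :=
  (a + b + 1 + (β / 2) * (2 * N - 1)) * j - (β / 2) * (N - j) * (2 * j + 1) +
    (β * N / 2 + b) * (N - 2 * j) - 1

def wCoeff (j : ℝ) : ℝ :=
  (a + b + 1 + (β / 2) * (2 * N - 1)) * (j - N) + (β / 2) * (N - j) * (N - j - 1) +
    (β * N / 2 + b) * (N - j)

theorem conjugation_identity_of_relations {J K c₀ c₁ c₂ : ℝ}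
    (h₁ : (N - K) * c₁ = (K - J + 1) * c₀) (h₂ : (N - K + 1) * c₂ = (K - J) * c₁) :
    (Btilde N a b β J - 1) * c₁ - Dtilde N b β J * (c₁ + c₀) =
      uCoeff N b β (K + 1) * c₀ + vCoeff N a b β K * c₁ + wCoeff N a b β (K - 1) * c₂ := by
  unfold Btilde Dtilde uCoeff vCoeff wCoeff
  linear_combination ((β / 2) * (1 + K + J - N) - b) * h₁ + (a + 1 - (β / 2) * (1 - K)) * h₂

end Coefficients

theorem Nat.cast_choose_succ_mul {R : Type*} [CommRing R] (m s : ℕ) :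
    (m.choose (s + 1) : R) * (s + 1) = m.choose s * (m - s) := by
  rcases le_or_gt s m with hsm | hms
  · have h := congrArg (Nat.cast (R := R)) (Nat.choose_succ_right_eq m s)
    push_cast [hsm] at h
    exact h
  · simp [Nat.choose_eq_zero_of_lt hms, Nat.choose_eq_zero_of_lt (hms.trans (Nat.lt_succ_self s))]

theorem choose_conjugation_entry (N : ℕ) (a b β : ℝ) {j k : ℕ} (hj : j ≤ N) (hk : k ≤ N) :
    (Btilde N a b β j - 1) * ((N - j).choose (N - k) : ℝ) +
        (if j = 0 then 0 else -Dtilde N b β j * ((N - (j - 1)).choose (N - k) : ℝ)) =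
      (if k + 1 < N + 1 then ((N - j).choose (N - (k + 1)) : ℝ) * uCoeff N b β ↑(k + 1) else 0) +
        ((N - j).choose (N - k) : ℝ) * vCoeff N a b β k +
        (if k = 0 then 0 else ((N - j).choose (N - (k - 1)) : ℝ) * wCoeff N a b β ↑(k - 1)) := by
  -- `c₀` is `C(N - j, N - k - 1)` read as `0` at `k = N`, where ℕ-subtraction would give `1`.
  set c₀ : ℝ := if k < N then ((N - j).choose (N - (k + 1)) : ℝ) else 0 with hc₀
  set c₁ := ((N - j).choose (N - k) : ℝ)
  set c₂ := ((N - j).choose (N - k + 1) : ℝ)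
  have hm : ((N - j : ℕ) : ℝ) = N - j := Nat.cast_sub hj
  have hs : ((N - k : ℕ) : ℝ) = N - k := Nat.cast_sub hk
  have hD : (if j = 0 then 0 else -Dtilde N b β j * ((N - (j - 1)).choose (N - k) : ℝ)) =
      -(Dtilde N b β j * (c₁ + c₀)) := by
    rcases Nat.eq_zero_or_pos j with rfl | hj0
    · simp [Dtilde]
    have hpascal : (N - j + 1).choose (N - k) =
        (N - j).choose (N - k) + if k < N then (N - j).choose (N - (k + 1)) else 0 := by
      rcases hk.lt_or_eq with hkN | rfl
      · rw [if_pos hkN, show N - k = N - (k + 1) + 1 by omega, Nat.choose_succ_succ', add_comm]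
      · simp
    rw [if_neg hj0.ne', show N - (j - 1) = N - j + 1 by omega, hpascal]
    push_cast [hc₀]
    ring
  have hu : (if k + 1 < N + 1 then ((N - j).choose (N - (k + 1)) : ℝ) * uCoeff N b β ↑(k + 1)
      else 0) = uCoeff N b β (k + 1) * c₀ := by
    simp only [hc₀, Nat.add_lt_add_iff_right]
    split_ifs <;> push_cast <;> ring
  have hw : (if k = 0 then 0 else ((N - j).choose (N - (k - 1)) : ℝ) * wCoeff N a b β ↑(k - 1)) =
      wCoeff N a b β (k - 1) * c₂ := by
    rcases Nat.eq_zero_or_pos k with rfl | hk0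
    · simp [c₂, Nat.choose_eq_zero_of_lt (show N - j < N + 1 by omega)]
    · rw [if_neg hk0.ne', show N - (k - 1) = N - k + 1 by omega, Nat.cast_sub hk0]
      push_cast; ring
  have h₁ : (N - k) * c₁ = (k - j + 1) * c₀ := by
    rcases hk.lt_or_eq with hkN | rfl
    · have h := Nat.cast_choose_succ_mul (R := ℝ) (N - j) (N - (k + 1))
      rw [show N - (k + 1) + 1 = N - k by omega, Nat.cast_sub hkN, hm] at h
      rw [hc₀, if_pos hkN]
      push_cast at h
      linear_combination h
    · simp [hc₀]
  have h₂ : (N - k + 1) * c₂ = (k - j) * c₁ := by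
    have h := Nat.cast_choose_succ_mul (R := ℝ) (N - j) (N - k)
    rw [hm, hs] at h
    linear_combination h
  rw [hD, hu, hw, ← sub_eq_add_neg]
  linear_combination conjugation_identity_of_relations N a b β h₁ h₂

theorem conjugated_B_matrix_general (N : ℕ) (a b β : ℝ)
    (Bt Dt u v w : ℕ → ℝ)
    (hBt : ∀ p : ℕ, Bt p = p * (a + b + 1 + (β / 2) * (2 * (N : ℝ) - p - 1)))
    (hDt : ∀ p : ℕ, Dt p = p * ((β / 2) * ((N : ℝ) - p) + b))
    (hu : ∀ j : ℕ, u j = -(j : ℝ) * (β * N / 2 + b) + (β / 2) * (j : ℝ) ^ 2)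
    (hv : ∀ j : ℕ, v j = (a + b + 1 + (β / 2) * (2 * (N : ℝ) - 1)) * j -
      (β / 2) * ((N : ℝ) - j) * (2 * (j : ℝ) + 1) + (β * N / 2 + b) * ((N : ℝ) - 2 * j) - 1)
    (hw : ∀ j : ℕ, w j = (a + b + 1 + (β / 2) * (2 * (N : ℝ) - 1)) * ((j : ℝ) - N) +
      (β / 2) * ((N : ℝ) - j) * ((N : ℝ) - j - 1) + (β * N / 2 + b) * ((N : ℝ) - j))
    (B P X : Matrix (Fin (N + 1)) (Fin (N + 1)) ℝ)
    (hB : ∀ j k : Fin (N + 1),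
      B j k = if k = j then Bt j - 1
        else if (k : ℕ) + 1 = (j : ℕ) then -Dt j else 0)
    (hP : ∀ j k : Fin (N + 1), P j k = ((N - (j : ℕ)).choose (N - (k : ℕ)) : ℝ))
    (hX : ∀ j k : Fin (N + 1),
      X j k = if (k : ℕ) + 1 = (j : ℕ) then u j
        else if k = j then v j
        else if (k : ℕ) = (j : ℕ) + 1 then w j else 0) :
    B * P = P * X := by
  ext j k
  set reversedPascal := fun j k : ℕ => ((N - j).choose (N - k) : ℝ)
  rw [Matrix.mul_apply_of_lowerBidiagonal (d := fun p => Bt p - 1) (e := fun p => -Dt p)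
      (m := reversedPascal) hB hP, Matrix.mul_apply_of_tridiagonal (m := reversedPascal) hP hX]
  obtain rfl : Bt = fun p : ℕ => Btilde N a b β p := funext hBt
  obtain rfl : Dt = fun p : ℕ => Dtilde N b β p := funext hDt
  obtain rfl : u = fun j : ℕ => uCoeff N b β j := funext hu
  obtain rfl : v = fun j : ℕ => vCoeff N a b β j := funext hv
  obtain rfl : w = fun j : ℕ => wCoeff N a b β j := funext hw
  exact choose_conjugation_entry N a b β j.is_le k.is_le

theorem conjugated_B_matrix (N : ℕ) (hN : 1 ≤ N) (a b β : ℝ)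
    (Bt Dt u v w : ℕ → ℝ)
    (hBt : ∀ p : ℕ, Bt p = p * (a + b + 1 + (β / 2) * (2 * (N : ℝ) - p - 1)))
    (hDt : ∀ p : ℕ, Dt p = p * ((β / 2) * ((N : ℝ) - p) + b))
    (hu : ∀ j : ℕ, u j = -(j : ℝ) * (β * N / 2 + b) + (β / 2) * (j : ℝ) ^ 2)
    (hv : ∀ j : ℕ, v j = (a + b + 1 + (β / 2) * (2 * (N : ℝ) - 1)) * j -
      (β / 2) * ((N : ℝ) - j) * (2 * (j : ℝ) + 1) + (β * N / 2 + b) * ((N : ℝ) - 2 * j) - 1)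
    (hw : ∀ j : ℕ, w j = (a + b + 1 + (β / 2) * (2 * (N : ℝ) - 1)) * ((j : ℝ) - N) +
      (β / 2) * ((N : ℝ) - j) * ((N : ℝ) - j - 1) + (β * N / 2 + b) * ((N : ℝ) - j))
    (B P X : Matrix (Fin (N + 1)) (Fin (N + 1)) ℝ)
    (hB : ∀ j k : Fin (N + 1),
      B j k = if k = j then Bt j - 1
        else if (k : ℕ) + 1 = (j : ℕ) then -Dt j else 0)
    (hP : ∀ j k : Fin (N + 1), P j k = ((N - (j : ℕ)).choose (N - (k : ℕ)) : ℝ))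
    (hX : ∀ j k : Fin (N + 1),
      X j k = if (k : ℕ) + 1 = (j : ℕ) then u j
        else if k = j then v j
        else if (k : ℕ) = (j : ℕ) + 1 then w j else 0) :
    B * P = P * X :=
  conjugated_B_matrix_general N a b β Bt Dt u v w hBt hDt hu hv hw B P X hB hP hX
end
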